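/- arXiv:1606.00044 — 2 statements merged into one kernel-verified Lean document; each statement's English description precedes it below -/
import Mathlib

section
/- Let f : I → ℝ be a twice differentiable positive function on an open interval I satisfying f·f'' + (f')² - 1 = 0. Then there exist constants a, b such that f(u)² = u² + 2au + b for all u ∈ I. -/
lemma const_of_deriv_zero_on {s : Set ℝ} (hs : Convex ℝ s) {g : ℝ → ℝ}
    (hg : ∀ u ∈ s, HasDerivAt g 0 u) {x y : ℝ} (hx : x ∈ s) (hy : y ∈ s) :
    g x = g y := by
  have := hs.norm_image_sub_le_of_norm_hasDerivWithin_le (C := 0)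
    (f := g) (f' := fun _ => 0)
    (fun u hu => (hg u hu).hasDerivWithinAt) (fun u _ => by simp) hx hy
  simp at this
  linarith [sub_eq_zero.mp (norm_le_zero_iff.mp (by simpa using this))]

/-- a twice differentiable positive solution of
f·f'' + (f')² - 1 = 0 on an open interval satisfies f² = u² + 2au + b. -/
theorem meridian_minimal_ode_b_converse (p q : ℝ) (f f' f'' : ℝ → ℝ)
    (hf : ∀ u ∈ Set.Ioo p q, HasDerivAt f (f' u) u)
    (hf' : ∀ u ∈ Set.Ioo p q, HasDerivAt f' (f'' u) u)
    (hfpos : ∀ u ∈ Set.Ioo p q, 0 < f u)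
    (hode : ∀ u ∈ Set.Ioo p q, f u * f'' u + (f' u)^2 - 1 = 0) :
    ∃ a b : ℝ, ∀ u ∈ Set.Ioo p q, (f u)^2 = u^2 + 2*a*u + b := by
  rcases Set.eq_empty_or_nonempty (Set.Ioo p q) with he | ⟨x0, hx0⟩
  · exact ⟨0, 0, fun u hu => absurd hu (he ▸ Set.notMem_empty u)⟩
  set h : ℝ → ℝ := fun u => f u * f' u - u with hh
  have hder : ∀ u ∈ Set.Ioo p q, HasDerivAt h 0 u := by
    intro u hu
    have := (((hf u hu).mul (hf' u hu)).sub (hasDerivAt_id u))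
    have heq : f' u * f' u + f u * f'' u - 1 = 0 := by
      have := hode u hu; nlinarith [sq_nonneg (f' u)]
    simpa [h, heq, Pi.mul_def, Pi.sub_def] using this
  have hconst : ∀ u ∈ Set.Ioo p q, h u = h x0 := fun u hu =>
    const_of_deriv_zero_on (convex_Ioo p q) hder hu hx0
  set a := h x0 with ha
  set g : ℝ → ℝ := fun u => (f u)^2 - u^2 - 2*a*u with hg
  have hgder : ∀ u ∈ Set.Ioo p q, HasDerivAt g 0 u := by
    intro u hu
    have hd := (((hf u hu).mul (hf u hu)).sub ((hasDerivAt_id u).mul (hasDerivAt_id u))).sub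
      (((hasDerivAt_const u (2*a)).mul (hasDerivAt_id u)))
    have hc := hconst u hu
    simp only [h] at hc
    have h2 : HasDerivAt (fun x => f x * f x - x * x - 2 * a * x)
        (f' u * f u + f u * f' u - (u + u) - 2 * a) u := by simpa [Pi.mul_def, Pi.sub_def] using hd
    have heq : f' u * f u + f u * f' u - (u + u) - 2 * a = 0 := by nlinarith [hc]
    rw [heq] at h2
    have hfun : g = fun x => f x * f x - x * x - 2 * a * x := by
      ext v; simp [g, sq]
    rw [hfun]; exact h2
  have hgconst : ∀ u ∈ Set.Ioo p q, g u = g x0 := fun u hu =>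
    const_of_deriv_zero_on (convex_Ioo p q) hgder hu hx0
  refine ⟨a, g x0, fun u hu => ?_⟩
  have := hgconst u hu
  simp only [g] at this ⊢
  linarith
end

section
/- Let f : I → ℝ be a twice differentiable function on an open interval I with f > 0 and (f')² + 1 > 0, satisfying (f·f'' + (f')² + 1)² = a²·((f')² + 1) for a constant a ≠ 0, and suppose f' = φ ∘ f for a differentiable function φ on f(I) with f' ≠ 0. Then z(t) := √(φ(t)² + 1) satisfies (z'(t) + z(t)/t)² = a²/t² on f(I). -/
/-- reduction of the quasi-minimality equation
(f·f'' + (f')² + 1)² = a²·((f')² + 1) via f' = φ ∘ f to the ODE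
(z' + z/t)² = a²/t² for z = √(φ² + 1). -/
theorem quasiminimal_reduction (p q a : ℝ) (ha : a ≠ 0)
    (f f' f'' φ φ' : ℝ → ℝ)
    (hf : ∀ u ∈ Set.Ioo p q, HasDerivAt f (f' u) u)
    (hf' : ∀ u ∈ Set.Ioo p q, HasDerivAt f' (f'' u) u)
    (hfpos : ∀ u ∈ Set.Ioo p q, 0 < f u)
    (hne : ∀ u ∈ Set.Ioo p q, (f' u)^2 + 1 > 0)
    (hode : ∀ u ∈ Set.Ioo p q,
      (f u * f'' u + (f' u)^2 + 1)^2 = a^2 * ((f' u)^2 + 1))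
    (hcomp : ∀ u ∈ Set.Ioo p q, f' u = φ (f u))
    (hf'ne : ∀ u ∈ Set.Ioo p q, f' u ≠ 0)
    (hφ : ∀ t ∈ f '' Set.Ioo p q, HasDerivAt φ (φ' t) t)
    (z : ℝ → ℝ) (hz : ∀ t, z t = Real.sqrt ((φ t)^2 + 1)) :
    ∀ t ∈ f '' Set.Ioo p q, (deriv z t + z t / t)^2 = a^2 / t^2 := by
  rintro t ⟨u, hu, rfl⟩
  set t := f u with htdef
  have ht0 : 0 < t := hfpos u hu
  have hφt : φ t = f' u := (hcomp u hu).symm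
  have hpos : (0:ℝ) < (φ t)^2 + 1 := by positivity
  have hzt : z t = Real.sqrt ((φ t)^2 + 1) := hz t
  have hzpos : 0 < z t := by rw [hzt]; exact Real.sqrt_pos.mpr hpos
  have hz2 : (z t)^2 = (φ t)^2 + 1 := by
    rw [hzt, Real.sq_sqrt hpos.le]
  -- derivative of z at t
  have hφd : HasDerivAt φ (φ' t) t := hφ t ⟨u, hu, rfl⟩
  have hinner : HasDerivAt (fun s => (φ s)^2 + 1) (2 * φ t * φ' t) t := by
    simpa [mul_comm, mul_assoc] using ((hφd.pow 2).add_const 1)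
  have hzd : HasDerivAt z ((2 * φ t * φ' t) / (2 * Real.sqrt ((φ t)^2 + 1))) t := by
    have := hinner.sqrt (by positivity)
    exact this.congr_deriv rfl |>.congr_of_eventuallyEq
      (Filter.Eventually.of_forall fun s => (hz s))
  have hderivz : deriv z t = (φ t * φ' t) / z t := by
    rw [hzd.deriv, hzt]
    rw [show Real.sqrt ((φ t)^2 + 1) = z t from hzt.symm]
    ring
  -- second derivative identity
  have hf''eq : f'' u = φ' t * φ t := by
    have hcompd : HasDerivAt (fun v => φ (f v)) (φ' t * f' u) u :=
      (hφ (f u) ⟨u, hu, rfl⟩).comp u (hf u hu)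
    have heq : f' =ᶠ[nhds u] (fun v => φ (f v)) :=
      Filter.eventuallyEq_of_mem (isOpen_Ioo.mem_nhds hu) hcomp
    have : HasDerivAt f' (φ' t * f' u) u := hcompd.congr_of_eventuallyEq heq
    rw [(hf' u hu).unique this, hφt]
  have hodet : (t * (φ' t * φ t) + (φ t)^2 + 1)^2 = a^2 * ((φ t)^2 + 1) := by
    have h := hode u hu
    rw [hf''eq, ← htdef, ← hφt] at h
    exact h
  rw [hderivz]
  have hzne : z t ≠ 0 := hzpos.ne'
  have htne : t ≠ 0 := ht0.ne'
  have e1 : φ t * φ' t / z t + z t / t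
      = (t * (φ' t * φ t) + ((φ t)^2 + 1)) / (z t * t) := by
    rw [← hz2]
    field_simp
  rw [e1, div_pow, mul_pow, ← add_assoc, hodet, ← hz2]
  field_simp
end
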